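/- arXiv:1603.02059 — 6 statements merged into one kernel-verified Lean document; each statement's English description precedes it below -/
import Mathlib

section
/- For any d×N real Parseval frame E (i.e., E E* = I_d) and a simple connected weighted graph G on N ≥ d ≥ 2 vertices, the sum of the d smallest eigenvalues of L + Δ ≤ ‖D_r χ* E*‖²_{fr} + ‖D_r E*‖²_{fr} ≤ sum of the d largest eigenvalues of L + Δ, and both bounds are attained by suitable Parseval frames. -/
/-!
Using `Drᵀ Dr = L` and `L = χ Δ χᵀ`, the energy of a frame `A` is `tr (A χ (L + Δ) χᵀ Aᵀ)`;
in the eigenbasis `P` of `L + Δ` it becomes `∑ⱼ cⱼ λ̃ⱼ`, where `cⱼ` is the squared norm of the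
`j`-th column of `F = A χ P`. Since `F` again has orthonormal rows, `Fᵀ F` is an orthogonal
projection of rank `d`, so the weights `cⱼ` lie in `[0, 1]` and sum to `d`. Such a weighted sum is
squeezed between the sums of the `d` smallest and the `d` largest `λ̃ⱼ`, and the frames whose
`F` selects `d` coordinates attain both ends.
-/

open Matrix BigOperators

/-- A simple (loopless, undirected) connected weighted graph on `N` vertices,
presented via its weight function. -/
structure GraphLaplacian (N : ℕ) where
  w : Fin N → Fin N → ℝ
  symm : ∀ i j, w i j = w j i
  nonneg : ∀ i j, 0 ≤ w i j
  loopless : ∀ i, w i i = 0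
  connected : ∀ i j : Fin N, Relation.ReflTransGen (fun a b => 0 < w a b) i j

/-- The graph Laplacian `L = D - A`. -/
def GraphLaplacian.L {N : ℕ} (G : GraphLaplacian N) : Matrix (Fin N) (Fin N) ℝ :=
  fun i j => if i = j then ∑ k, G.w i k else -G.w i j

open Finset in
theorem sum_le_sum_mul_of_threshold {ι : Type*} [Fintype ι] [DecidableEq ι] (S : Finset ι)
    (lam c : ι → ℝ) (t : ℝ) (hc0 : ∀ j, 0 ≤ c j) (hc1 : ∀ j, c j ≤ 1) (hc : ∑ j, c j = #S)
    (hS : ∀ j ∈ S, lam j ≤ t) (hSc : ∀ j ∉ S, t ≤ lam j) :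
    ∑ j ∈ S, lam j ≤ ∑ j, c j * lam j := by
  have hdefect : ∑ j ∈ S, (1 - c j) = ∑ j ∈ Sᶜ, c j := by
    rw [sum_sub_distrib, sum_const, nsmul_one, ← hc, ← sum_add_sum_compl S c]
    ring
  calc ∑ j ∈ S, lam j = ∑ j ∈ S, c j * lam j + ∑ j ∈ S, (1 - c j) * lam j := by
        rw [← sum_add_distrib]; exact sum_congr rfl fun j _ => by ring
    _ ≤ ∑ j ∈ S, c j * lam j + ∑ j ∈ S, (1 - c j) * t := by
        gcongr with j hj
        · exact sub_nonneg.mpr (hc1 j)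
        · exact hS j hj
    _ = ∑ j ∈ S, c j * lam j + ∑ j ∈ Sᶜ, c j * t := by rw [← sum_mul, ← sum_mul, hdefect]
    _ ≤ ∑ j ∈ S, c j * lam j + ∑ j ∈ Sᶜ, c j * lam j := by
        gcongr with j hj
        · exact hc0 j
        · exact hSc j (mem_compl.mp hj)
    _ = ∑ j, c j * lam j := sum_add_sum_compl S _

theorem Monotone.exists_threshold {N : ℕ} {lam : Fin N → ℝ} (hmono : Monotone lam) (k : ℕ) :
    ∃ t, (∀ j : Fin N, (j : ℕ) < k → lam j ≤ t) ∧ (∀ j : Fin N, k ≤ (j : ℕ) → t ≤ lam j) := by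
  rcases N with _ | N
  · exact ⟨0, fun j => j.elim0, fun j => j.elim0⟩
  · refine ⟨lam ⟨min (k - 1) N, by omega⟩, fun j hj => hmono ?_, fun j hj => hmono ?_⟩ <;>
      simp only [Fin.le_def] <;> omega

theorem Fin.card_filter_le_val {n m : ℕ} :
    (Finset.univ.filter fun i : Fin n => m ≤ (i : ℕ)).card = n - m := by
  have := Finset.card_filter_add_card_filter_not (s := Finset.univ) (fun i : Fin n => (i : ℕ) < m)
  simp only [not_lt, Finset.card_univ, Fintype.card_fin, Fin.card_filter_val_lt] at this
  omega

section Weights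

variable {N d : ℕ} {lam : Fin N → ℝ} {c : Fin N → ℝ}

theorem sum_filter_lt_le_sum_mul (hdN : d ≤ N) (hmono : Monotone lam) (hc0 : ∀ j, 0 ≤ c j)
    (hc1 : ∀ j, c j ≤ 1) (hc : ∑ j, c j = d) :
    ∑ j ∈ Finset.univ.filter (fun j : Fin N => (j : ℕ) < d), lam j ≤ ∑ j, c j * lam j := by
  obtain ⟨t, hlt, hge⟩ := hmono.exists_threshold d
  refine sum_le_sum_mul_of_threshold _ lam c t hc0 hc1 ?_ (fun j hj => hlt j ?_)
    (fun j hj => hge j ?_)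
  · rw [hc, Fin.card_filter_val_lt, min_eq_right hdN]
  · simpa using hj
  · simpa using hj

theorem sum_mul_le_sum_filter_le (hdN : d ≤ N) (hmono : Monotone lam) (hc0 : ∀ j, 0 ≤ c j)
    (hc1 : ∀ j, c j ≤ 1) (hc : ∑ j, c j = d) :
    ∑ j, c j * lam j ≤ ∑ j ∈ Finset.univ.filter (fun j : Fin N => N - d ≤ (j : ℕ)), lam j := by
  obtain ⟨t, hlt, hge⟩ := hmono.exists_threshold (N - d)
  have := sum_le_sum_mul_of_threshold _ (-lam) c (-t) hc0 hc1
    (by rw [hc, Fin.card_filter_le_val, Nat.sub_sub_self hdN])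
    (fun j hj => neg_le_neg (hge j (by simpa using hj)))
    (fun j hj => neg_le_neg (hlt j (by rwa [Finset.mem_filter_univ, not_le] at hj)))
  simpa only [Pi.neg_apply, Finset.sum_neg_distrib, mul_neg, neg_le_neg_iff] using this

end Weights

namespace Matrix

variable {m n : Type*}

theorem trace_transpose_mul_self_mul [Fintype m] [Fintype n] {l : Type*} [Fintype l]
    (A : Matrix m n ℝ) (B : Matrix n l ℝ) :
    trace ((A * B)ᵀ * (A * B)) = trace (Bᵀ * (Aᵀ * A) * B) := by
  simp only [transpose_mul, Matrix.mul_assoc]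

theorem eq_mul_mul_transpose_of_transpose_mul_mul_eq [Fintype n] [DecidableEq n]
    {U A B : Matrix n n ℝ} (hU : Uᵀ * U = 1) (h : Uᵀ * A * U = B) : A = U * B * Uᵀ := by
  have hU' : U * Uᵀ = 1 := mul_eq_one_comm.mp hU
  rw [← h, ← Matrix.mul_assoc, ← Matrix.mul_assoc, hU', Matrix.one_mul, Matrix.mul_assoc, hU',
    Matrix.mul_one]

theorem transpose_mul_mul_eq_one [Fintype n] [DecidableEq n] {U V : Matrix n n ℝ}
    (hU : Uᵀ * U = 1) (hV : Vᵀ * V = 1) : (U * V)ᵀ * (U * V) = 1 := by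
  rw [transpose_mul, Matrix.mul_assoc, ← Matrix.mul_assoc Uᵀ, hU, Matrix.one_mul, hV]

theorem mul_mul_transpose_eq_one [Fintype n] [DecidableEq m] [DecidableEq n] {F : Matrix m n ℝ}
    {U : Matrix n n ℝ} (hF : F * Fᵀ = 1) (hU : U * Uᵀ = 1) : F * U * (F * U)ᵀ = 1 := by
  rw [transpose_mul, Matrix.mul_assoc, ← Matrix.mul_assoc U, hU, Matrix.one_mul, hF]

theorem trace_mul_diagonal_mul_transpose [Fintype m] [Fintype n] [DecidableEq n] (F : Matrix m n ℝ)
    (lam : n → ℝ) : trace (F * diagonal lam * Fᵀ) = ∑ j, (Fᵀ * F) j j * lam j := by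
  rw [trace_mul_cycle]
  simp only [trace, diag_apply, mul_diagonal]

theorem transpose_mul_self_apply_self_nonneg [Fintype m] (F : Matrix m n ℝ) (j : n) :
    0 ≤ (Fᵀ * F) j j :=
  Finset.sum_nonneg fun i _ => mul_self_nonneg (F i j)

/-- `Q = Fᵀ F` is a symmetric idempotent, so `Q j j = ∑ₖ (Q j k)² ≥ (Q j j)²`. -/
theorem transpose_mul_self_apply_self_le_one [Fintype m] [Fintype n] [DecidableEq m]
    {F : Matrix m n ℝ} (hF : F * Fᵀ = 1) (j : n) : (Fᵀ * F) j j ≤ 1 := by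
  set Q := Fᵀ * F
  have hsymm : Qᵀ = Q := by simp [Q]
  have hidem : Q * Q = Q := by
    rw [Matrix.mul_assoc, ← Matrix.mul_assoc F, hF, Matrix.one_mul]
  have hsq : Q j j * Q j j ≤ Q j j :=
    calc Q j j * Q j j ≤ ∑ k, Q j k * Q j k :=
          Finset.single_le_sum (fun k _ => mul_self_nonneg (Q j k)) (Finset.mem_univ j)
      _ = (Q * Q) j j := by
          simp only [mul_apply]
          exact Finset.sum_congr rfl fun k _ => by rw [← transpose_apply Q k j, hsymm]
      _ = Q j j := by rw [hidem]
  nlinarith [transpose_mul_self_apply_self_nonneg F j]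

theorem sum_transpose_mul_self_apply_self [Fintype m] [Fintype n] [DecidableEq m] {F : Matrix m n ℝ}
    (hF : F * Fᵀ = 1) : ∑ j, (Fᵀ * F) j j = Fintype.card m := by
  change trace (Fᵀ * F) = _
  rw [trace_mul_comm, hF, trace_one]

open Finset in
theorem exists_mul_transpose_eq_one_trace_eq_sum [Fintype m] [Fintype n] [DecidableEq m]
    [DecidableEq n]
    (S : Finset n) (hS : #S = Fintype.card m) (lam : n → ℝ) :
    ∃ F : Matrix m n ℝ, F * Fᵀ = 1 ∧ trace (F * diagonal lam * Fᵀ) = ∑ j ∈ S, lam j := by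
  let e : m ≃ S := Fintype.equivOfCardEq (by rw [Fintype.card_coe, hS])
  let f : m ↪ n := e.toEmbedding.trans (Function.Embedding.subtype _)
  refine ⟨(1 : Matrix n n ℝ).submatrix f id, ?_, ?_⟩
  · rw [transpose_submatrix, transpose_one, ← submatrix_mul _ _ _ _ _ Function.bijective_id,
      Matrix.mul_one, submatrix_one_embedding]
  · have hsel : (1 : Matrix n n ℝ).submatrix f id * diagonal lam * (1 : Matrix n n ℝ).submatrix id f
        = (diagonal lam).submatrix f f := by
      have hleft := one_submatrix_mul f (Equiv.refl n) (diagonal lam)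
      have hright := mul_submatrix_one (Equiv.refl n) f ((diagonal lam).submatrix f id)
      simp only [Equiv.coe_refl, Equiv.refl_symm, Function.id_comp, submatrix_submatrix,
        Function.comp_id] at hleft hright
      rw [hleft, hright]
    rw [transpose_submatrix, transpose_one, hsel, submatrix_diagonal_embedding, trace_diagonal,
      ← sum_coe_sort S]
    exact e.sum_comp (fun j : S => lam j)

end Matrix

theorem trace_frame_energy_eq {k n m : Type*} [Fintype k] [Fintype n] [DecidableEq n]
    [Fintype m] {L : Matrix n n ℝ} {Dr : Matrix k n ℝ} (hDr : Drᵀ * Dr = L) {χ : Matrix n n ℝ}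
    {lamΔ : n → ℝ} (hχ : χᵀ * χ = 1) (hdiag : χᵀ * L * χ = diagonal lamΔ) {lam : n → ℝ}
    {P : Matrix n n ℝ} (hP : Pᵀ * P = 1) (hPdiag : Pᵀ * (L + diagonal lamΔ) * P = diagonal lam)
    (A : Matrix m n ℝ) :
    trace ((Dr * χᵀ * Aᵀ)ᵀ * (Dr * χᵀ * Aᵀ)) + trace ((Dr * Aᵀ)ᵀ * (Dr * Aᵀ)) =
      trace (A * (χ * P) * diagonal lam * (A * (χ * P))ᵀ) := by
  have hL := eq_mul_mul_transpose_of_transpose_mul_mul_eq hχ hdiag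
  have hM := eq_mul_mul_transpose_of_transpose_mul_mul_eq hP hPdiag
  have hrotated : (χᵀ * Aᵀ)ᵀ * L * (χᵀ * Aᵀ) = A * χ * L * (A * χ)ᵀ := by
    simp only [transpose_mul, transpose_transpose, Matrix.mul_assoc]
  have hdiagonal : Aᵀᵀ * L * Aᵀ = A * χ * diagonal lamΔ * (A * χ)ᵀ := by
    rw [hL]
    simp only [transpose_mul, transpose_transpose, Matrix.mul_assoc]
  rw [Matrix.mul_assoc Dr, trace_transpose_mul_self_mul, trace_transpose_mul_self_mul, hDr,
    hrotated, hdiagonal, ← trace_add, ← Matrix.add_mul, ← Matrix.mul_add, hM]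
  simp only [transpose_mul, Matrix.mul_assoc]

theorem graph_frame_uncertainty_general {N d Ecard : ℕ} (hdN : d ≤ N)
    (G : GraphLaplacian N)
    (Dr : Matrix (Fin Ecard) (Fin N) ℝ) (hDr : Drᵀ * Dr = G.L)
    (χ : Matrix (Fin N) (Fin N) ℝ) (lamΔ : Fin N → ℝ)
    (hχ : χᵀ * χ = 1)
    (hdiag : χᵀ * G.L * χ = Matrix.diagonal lamΔ)
    (lam : Fin N → ℝ) (P : Matrix (Fin N) (Fin N) ℝ)
    (hP : Pᵀ * P = 1)
    (hPdiag : Pᵀ * (G.L + Matrix.diagonal lamΔ) * P = Matrix.diagonal lam)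
    (hmono : Monotone lam)
    (E : Matrix (Fin d) (Fin N) ℝ) (hE : E * Eᵀ = 1) :
    ((∑ j ∈ Finset.univ.filter (fun j : Fin N => (j : ℕ) < d), lam j) ≤
        Matrix.trace ((Dr * χᵀ * Eᵀ)ᵀ * (Dr * χᵀ * Eᵀ)) +
          Matrix.trace ((Dr * Eᵀ)ᵀ * (Dr * Eᵀ)) ∧
      Matrix.trace ((Dr * χᵀ * Eᵀ)ᵀ * (Dr * χᵀ * Eᵀ)) +
          Matrix.trace ((Dr * Eᵀ)ᵀ * (Dr * Eᵀ)) ≤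
        ∑ j ∈ Finset.univ.filter (fun j : Fin N => N - d ≤ (j : ℕ)), lam j) ∧
    (∃ E' : Matrix (Fin d) (Fin N) ℝ, E' * E'ᵀ = 1 ∧
      Matrix.trace ((Dr * χᵀ * E'ᵀ)ᵀ * (Dr * χᵀ * E'ᵀ)) +
          Matrix.trace ((Dr * E'ᵀ)ᵀ * (Dr * E'ᵀ)) =
        ∑ j ∈ Finset.univ.filter (fun j : Fin N => (j : ℕ) < d), lam j) ∧
    (∃ E' : Matrix (Fin d) (Fin N) ℝ, E' * E'ᵀ = 1 ∧
      Matrix.trace ((Dr * χᵀ * E'ᵀ)ᵀ * (Dr * χᵀ * E'ᵀ)) +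
          Matrix.trace ((Dr * E'ᵀ)ᵀ * (Dr * E'ᵀ)) =
        ∑ j ∈ Finset.univ.filter (fun j : Fin N => N - d ≤ (j : ℕ)), lam j) := by
  have henergy := trace_frame_energy_eq (m := Fin d) hDr hχ hdiag hP hPdiag
  have hU : (χ * P)ᵀ * (χ * P) = 1 := transpose_mul_mul_eq_one hχ hP
  have hF : E * (χ * P) * (E * (χ * P))ᵀ = 1 := mul_mul_transpose_eq_one hE (mul_eq_one_comm.mp hU)
  have hc0 := transpose_mul_self_apply_self_nonneg (E * (χ * P))
  have hc1 := transpose_mul_self_apply_self_le_one hF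
  have hc : ∑ j, ((E * (χ * P))ᵀ * (E * (χ * P))) j j = d := by
    rw [sum_transpose_mul_self_apply_self hF, Fintype.card_fin]
  have hattained (S : Finset (Fin N)) (hS : S.card = d) : ∃ E' : Matrix (Fin d) (Fin N) ℝ,
      E' * E'ᵀ = 1 ∧ trace ((Dr * χᵀ * E'ᵀ)ᵀ * (Dr * χᵀ * E'ᵀ)) +
        trace ((Dr * E'ᵀ)ᵀ * (Dr * E'ᵀ)) = ∑ j ∈ S, lam j := by
    obtain ⟨F, hF, htrace⟩ :=
      exists_mul_transpose_eq_one_trace_eq_sum (m := Fin d) S (by rw [hS, Fintype.card_fin]) lam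
    refine ⟨F * (χ * P)ᵀ, mul_mul_transpose_eq_one hF (by rwa [transpose_transpose]), ?_⟩
    rw [henergy, Matrix.mul_assoc F, hU, Matrix.mul_one, htrace]
  refine ⟨⟨?_, ?_⟩, hattained _ ?_, hattained _ ?_⟩
  · rw [henergy, trace_mul_diagonal_mul_transpose]
    exact sum_filter_lt_le_sum_mul hdN hmono hc0 hc1 hc
  · rw [henergy, trace_mul_diagonal_mul_transpose]
    exact sum_mul_le_sum_filter_le hdN hmono hc0 hc1 hc
  · rw [Fin.card_filter_val_lt, min_eq_right hdN]
  · rw [Fin.card_filter_le_val, Nat.sub_sub_self hdN]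

/-- frame uncertainty: for any `d × N` Parseval frame `E` (`E Eᵀ = 1`),
`∑_{j<d} λ̃_j ≤ ‖D_r χᵀ Eᵀ‖²_fr + ‖D_r Eᵀ‖²_fr ≤ ∑_{j ≥ N-d} λ̃_j`, where `λ̃₀ ≤ ⋯ ≤ λ̃_{N-1}`
are the eigenvalues of `L + Δ`; both bounds are attained by suitable Parseval frames. -/
theorem graph_frame_uncertainty {N d Ecard : ℕ} (hd : 2 ≤ d) (hdN : d ≤ N)
    (G : GraphLaplacian N)
    (Dr : Matrix (Fin Ecard) (Fin N) ℝ) (hDr : Drᵀ * Dr = G.L)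
    (χ : Matrix (Fin N) (Fin N) ℝ) (lamΔ : Fin N → ℝ)
    (hχ : χᵀ * χ = 1)
    (hdiag : χᵀ * G.L * χ = Matrix.diagonal lamΔ)
    (lam : Fin N → ℝ) (P : Matrix (Fin N) (Fin N) ℝ)
    (hP : Pᵀ * P = 1)
    (hPdiag : Pᵀ * (G.L + Matrix.diagonal lamΔ) * P = Matrix.diagonal lam)
    (hmono : Monotone lam)
    (E : Matrix (Fin d) (Fin N) ℝ) (hE : E * Eᵀ = 1) :
    ((∑ j ∈ Finset.univ.filter (fun j : Fin N => (j : ℕ) < d), lam j) ≤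
        Matrix.trace ((Dr * χᵀ * Eᵀ)ᵀ * (Dr * χᵀ * Eᵀ)) +
          Matrix.trace ((Dr * Eᵀ)ᵀ * (Dr * Eᵀ)) ∧
      Matrix.trace ((Dr * χᵀ * Eᵀ)ᵀ * (Dr * χᵀ * Eᵀ)) +
          Matrix.trace ((Dr * Eᵀ)ᵀ * (Dr * Eᵀ)) ≤
        ∑ j ∈ Finset.univ.filter (fun j : Fin N => N - d ≤ (j : ℕ)), lam j) ∧
    (∃ E' : Matrix (Fin d) (Fin N) ℝ, E' * E'ᵀ = 1 ∧
      Matrix.trace ((Dr * χᵀ * E'ᵀ)ᵀ * (Dr * χᵀ * E'ᵀ)) +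
          Matrix.trace ((Dr * E'ᵀ)ᵀ * (Dr * E'ᵀ)) =
        ∑ j ∈ Finset.univ.filter (fun j : Fin N => (j : ℕ) < d), lam j) ∧
    (∃ E' : Matrix (Fin d) (Fin N) ℝ, E' * E'ᵀ = 1 ∧
      Matrix.trace ((Dr * χᵀ * E'ᵀ)ᵀ * (Dr * χᵀ * E'ᵀ)) +
          Matrix.trace ((Dr * E'ᵀ)ᵀ * (Dr * E'ᵀ)) =
        ∑ j ∈ Finset.univ.filter (fun j : Fin N => N - d ≤ (j : ℕ)), lam j) :=
  graph_frame_uncertainty_general hdN G Dr hDr χ lamΔ hχ hdiag lam P hP hPdiag hmono E hE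
end

section
/- Let M₁, M₂ be rank-one positive semidefinite N×N real matrices with tr(Mᵢ) = 1, tr(Δ Mᵢ) = xᵢ, tr(L Mᵢ) = yᵢ for i = 1,2, where N ≥ 3. Then for every β ∈ [0,1] there exists a rank-one positive semidefinite matrix M with tr(M) = 1, tr(Δ M) = β x₁ + (1-β) x₂, and tr(L M) = β y₁ + (1-β) y₂. -/
open Matrix BigOperators

/-!
Brickman's theorem: for symmetric operators `A`, `B` on a real inner product space of dimension
at least three, the joint numerical range `{(⟪A x, x⟫, ⟪B x, x⟫) : ‖x‖ = 1}` is convex. Given two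
of its points `F u` and `F v`, the unit vectors `x` with `F x` on the line through them are the
unit null vectors of one symmetric operator `R`. Compressed to a three-dimensional subspace
through `u` and `v` and diagonalized, the unit null vectors of `R` are either the unit sphere of
a subspace or, up to sign, a single closed curve; in both cases they are connected up to
`x ↦ -x`. The position of `F x` along the line is an even continuous function of `x`, so the
intermediate value theorem reaches every point between `F u` and `F v`.

Rank-one positive semidefinite matrices of trace one are the `u uᵀ` with `‖u‖ = 1`, and
`tr (C u uᵀ) = ⟪C u, u⟫`, which turns the theorem into this convexity statement.
-/

open Set Module Pointwise Real
open scoped RealInnerProductSpace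

section UpToSign

variable {E : Type*} [TopologicalSpace E] [Neg E]

def IsPreconnectedUpToSign (Z : Set E) : Prop :=
  ∀ a ∈ Z, ∀ b ∈ Z, ∃ K ⊆ Z, IsPreconnected K ∧ a ∈ K ∧ (b ∈ K ∨ -b ∈ K)

theorem IsPreconnectedUpToSign.intermediate_value {Z : Set E} (hZ : IsPreconnectedUpToSign Z)
    {a b : E} (ha : a ∈ Z) (hb : b ∈ Z) {f : E → ℝ} (hf : ContinuousOn f Z) (hfb : f (-b) = f b) :
    Icc (f a) (f b) ⊆ f '' Z := by
  obtain ⟨K, hKZ, hK, haK, hbK⟩ := hZ a ha b hb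
  refine subset_trans ?_ (image_mono hKZ)
  rcases hbK with hbK | hbK
  · exact hK.intermediate_value haK hbK (hf.mono hKZ)
  · exact hfb ▸ hK.intermediate_value haK hbK (hf.mono hKZ)

theorem isPreconnectedUpToSign_of_subset_union_neg {E : Type*} [TopologicalSpace E]
    [InvolutiveNeg E] [ContinuousNeg E] {Z K : Set E} (hK : IsPreconnected K) (hKZ : K ⊆ Z)
    (hZ_neg : ∀ x ∈ Z, -x ∈ Z) (hZK : Z ⊆ K ∪ -K) : IsPreconnectedUpToSign Z := by
  have hK' : IsPreconnected (-K) := by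
    simpa only [image_neg_eq_neg] using hK.image _ continuous_neg.continuousOn
  have hKZ' : -K ⊆ Z := fun x hx => by simpa using hZ_neg _ (hKZ hx)
  intro a ha b hb
  rcases hZK ha with haK | haK
  · exact ⟨K, hKZ, hK, haK, (hZK hb).imp id mem_neg.mp⟩
  · refine ⟨-K, hKZ', hK', haK, (hZK hb).symm.imp id ?_⟩
    simp

end UpToSign

theorem isPreconnectedUpToSign_sphere_inter_submodule {E : Type*} [NormedAddCommGroup E]
    [NormedSpace ℝ E] (S : Submodule ℝ E) :
    IsPreconnectedUpToSign (Metric.sphere (0 : E) 1 ∩ S) := by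
  rintro a ⟨ha, haS⟩ b ⟨hb, hbS⟩
  rw [mem_sphere_zero_iff_norm] at ha hb
  by_cases hab : b = -a
  · exact ⟨{a}, singleton_subset_iff.2 ⟨by simpa using ha, haS⟩, isPreconnected_singleton, rfl,
      .inr (by simp [hab])⟩
  set seg : ℝ → E := fun t => (1 - t) • a + t • b
  have hseg : ∀ t ∈ Icc (0 : ℝ) 1, seg t ≠ 0 := by
    rintro t ⟨ht0, ht1⟩ h
    have hnorm : ‖(1 - t) • a‖ = ‖t • b‖ := by rw [eq_neg_of_add_eq_zero_left h, norm_neg]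
    rw [norm_smul, norm_smul, ha, hb, Real.norm_of_nonneg ht0, Real.norm_of_nonneg (by linarith)]
      at hnorm
    obtain rfl : t = 1 / 2 := by linarith
    have : (1 / 2 : ℝ) • (a + b) = 0 := by rw [smul_add]; convert h using 3; norm_num
    exact hab (eq_neg_of_add_eq_zero_right ((smul_eq_zero.1 this).resolve_left (by norm_num)))
  refine ⟨(fun t => ‖seg t‖⁻¹ • seg t) '' Icc 0 1, ?_, isPreconnected_Icc.image _ ?_,
    ⟨0, by simp, by simp [seg, ha]⟩, .inl ⟨1, by simp, by simp [seg, hb]⟩⟩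
  · rintro _ ⟨t, ht, rfl⟩
    refine ⟨by simp [norm_smul, inv_mul_cancel₀ (norm_ne_zero_iff.2 (hseg t ht))], ?_⟩
    exact S.smul_mem _ (S.add_mem (S.smul_mem _ haS) (S.smul_mem _ hbS))
  · have : Continuous seg := by fun_prop
    exact (this.norm.continuousOn.inv₀ fun t ht => norm_ne_zero_iff.2 (hseg t ht)).smul
      this.continuousOn

section NullSphere

variable {E : Type*} [NormedAddCommGroup E] [InnerProductSpace ℝ E]

def nullSphere (T : E →ₗ[ℝ] E) : Set E := {x | ‖x‖ = 1 ∧ ⟪T x, x⟫ = 0}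

theorem neg_mem_nullSphere {T : E →ₗ[ℝ] E} {x : E} (hx : x ∈ nullSphere T) :
    -x ∈ nullSphere T := by
  simpa [nullSphere] using hx

theorem nullSphere_smul {T : E →ₗ[ℝ] E} {s : ℝ} (hs : s ≠ 0) :
    nullSphere (s • T) = nullSphere T := by
  ext x
  simp [nullSphere, inner_smul_left, hs]

theorem inv_norm_smul_mem_nullSphere {T : E →ₗ[ℝ] E} {x : E} (hx : x ≠ 0)
    (hTx : ⟪T x, x⟫ = 0) : ‖x‖⁻¹ • x ∈ nullSphere T := by
  refine ⟨by simp [norm_smul, inv_mul_cancel₀ (norm_ne_zero_iff.2 hx)], ?_⟩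
  simp [inner_smul_left, inner_smul_right, hTx]

variable {ι : Type*} [Fintype ι] {T : E →ₗ[ℝ] E} {b : OrthonormalBasis ι ℝ E} {μ : ι → ℝ}

theorem OrthonormalBasis.norm_sq_eq_sum_repr (b : OrthonormalBasis ι ℝ E) (x : E) :
    ‖x‖ ^ 2 = ∑ i, b.repr x i ^ 2 := by
  rw [← b.repr.norm_map, EuclideanSpace.real_norm_sq_eq]

theorem OrthonormalBasis.repr_apply_of_apply_eq_smul (hb : ∀ i, T (b i) = μ i • b i) (x : E)
    (i : ι) : b.repr (T x) i = μ i * b.repr x i := by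
  classical
  conv_lhs => rw [← b.sum_repr x]
  simp [hb, smul_smul, Pi.single_apply, mul_comm]

theorem OrthonormalBasis.inner_apply_self_of_apply_eq_smul (hb : ∀ i, T (b i) = μ i • b i)
    (x : E) : ⟪T x, x⟫ = ∑ i, μ i * b.repr x i ^ 2 := by
  rw [← b.repr.inner_map_map, EuclideanSpace.inner_eq_star_dotProduct]
  simp only [dotProduct, b.repr_apply_of_apply_eq_smul hb, star_trivial]
  exact Finset.sum_congr rfl fun i _ => by ring

theorem nullSphere_eq_sphere_inter_ker (hb : ∀ i, T (b i) = μ i • b i) (hμ : ∀ i, μ i ≤ 0) :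
    nullSphere T = Metric.sphere 0 1 ∩ LinearMap.ker T := by
  ext x
  simp only [nullSphere, mem_inter_iff, mem_sphere_zero_iff_norm, SetLike.mem_coe,
    LinearMap.mem_ker]
  refine and_congr_right fun _ => ⟨fun h => ?_, fun h => by simp [h]⟩
  rw [b.inner_apply_self_of_apply_eq_smul hb, Finset.sum_eq_zero_iff_of_nonpos fun i _ =>
    mul_nonpos_of_nonpos_of_nonneg (hμ i) (sq_nonneg _)] at h
  rw [← b.repr.map_eq_zero_iff]
  ext i
  have := h i (Finset.mem_univ i)
  rw [b.repr_apply_of_apply_eq_smul hb]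
  simp only [mul_eq_zero, pow_eq_zero_iff two_ne_zero] at this ⊢
  simpa using this

end NullSphere

section NullConeCurve

variable {μ : Fin 3 → ℝ}

/-- For `μ₀ > 0 ≥ μ₁, μ₂`, the null vector of `∑ μᵢ cᵢ²` with `c₀ ≥ 0` whose coordinates
`(c₁, c₂)` point in the direction `θ`. -/
noncomputable def nullConeCurve (μ : Fin 3 → ℝ) (θ : ℝ) : Fin 3 → ℝ :=
  ![√(-(μ 1 * cos θ ^ 2 + μ 2 * sin θ ^ 2)), √(μ 0) * cos θ, √(μ 0) * sin θ]

theorem continuous_nullConeCurve : Continuous (nullConeCurve μ) := by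
  unfold nullConeCurve
  fun_prop

theorem nullConeCurve_ne_zero (h0 : 0 < μ 0) (θ : ℝ) : nullConeCurve μ θ ≠ 0 := fun h => by
  have h1 := congr_fun h 1
  have h2 := congr_fun h 2
  simp only [nullConeCurve, cons_val_one, cons_val_zero, cons_val, Pi.zero_apply, mul_eq_zero,
    (sqrt_pos.2 h0).ne', false_or] at h1 h2
  simpa [h1, h2] using sin_sq_add_cos_sq θ

theorem sum_mul_nullConeCurve_sq (h0 : 0 ≤ μ 0) (h1 : μ 1 ≤ 0) (h2 : μ 2 ≤ 0) (θ : ℝ) :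
    ∑ i, μ i * nullConeCurve μ θ i ^ 2 = 0 := by
  have hg : 0 ≤ -(μ 1 * cos θ ^ 2 + μ 2 * sin θ ^ 2) := by
    nlinarith [mul_nonpos_of_nonpos_of_nonneg h1 (sq_nonneg (cos θ)),
      mul_nonpos_of_nonpos_of_nonneg h2 (sq_nonneg (sin θ))]
  simp only [Fin.sum_univ_three, nullConeCurve, Matrix.cons_val_zero, Matrix.cons_val_one,
    Matrix.cons_val_two, Matrix.head_cons, Matrix.tail_cons, mul_pow, sq_sqrt hg, sq_sqrt h0]
  ring

theorem exists_nullConeCurve_eq_smul {c : Fin 3 → ℝ} (h0 : 0 < μ 0) (hc : c ≠ 0)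
    (hnull : ∑ i, μ i * c i ^ 2 = 0) (hc0 : 0 ≤ c 0) :
    ∃ θ k : ℝ, 0 < k ∧ nullConeCurve μ θ = k • c := by
  rw [Fin.sum_univ_three] at hnull
  set z : ℂ := ⟨c 1, c 2⟩
  have hz : ‖z‖ ≠ 0 := norm_ne_zero_iff.2 fun h => hc <| by
    have h12 : c 1 = 0 ∧ c 2 = 0 := by simpa [z] using congr_arg (fun w : ℂ => (w.re, w.im)) h
    have h0' : c 0 = 0 := by
      rw [h12.1, h12.2] at hnull
      simpa [h0.ne'] using hnull
    ext i
    fin_cases i <;> simp [h0', h12]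
  have hcos : cos (Complex.arg z) = c 1 / ‖z‖ := eq_div_of_mul_eq hz (by simp [mul_comm, z])
  have hsin : sin (Complex.arg z) = c 2 / ‖z‖ := eq_div_of_mul_eq hz (by simp [mul_comm, z])
  have hk : 0 < √(μ 0) / ‖z‖ := div_pos (sqrt_pos.2 h0) (norm_pos_iff.2 (norm_ne_zero_iff.1 hz))
  refine ⟨Complex.arg z, √(μ 0) / ‖z‖, hk, ?_⟩
  ext i
  fin_cases i
  · simp only [nullConeCurve, Fin.zero_eta, Matrix.cons_val_zero, Pi.smul_apply, smul_eq_mul]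
    rw [← sqrt_sq (mul_nonneg hk.le hc0), hcos, hsin]
    congr 1
    field_simp
    rw [sq_sqrt h0.le]
    linear_combination -hnull
  · simp only [nullConeCurve, hcos, Fin.mk_one, cons_val_one, cons_val_zero, Pi.smul_apply,
      smul_eq_mul]
    ring
  · simp only [nullConeCurve, hsin, Fin.reduceFinMk, cons_val, Pi.smul_apply, smul_eq_mul]
    ring

end NullConeCurve

theorem isPreconnectedUpToSign_nullSphere_of_one_positive_eigenvalue {E : Type*}
    [NormedAddCommGroup E] [InnerProductSpace ℝ E] {T : E →ₗ[ℝ] E}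
    {b : OrthonormalBasis (Fin 3) ℝ E} {μ : Fin 3 → ℝ} (hb : ∀ i, T (b i) = μ i • b i)
    (h0 : 0 < μ 0) (h1 : μ 1 ≤ 0) (h2 : μ 2 ≤ 0) : IsPreconnectedUpToSign (nullSphere T) := by
  set v : ℝ → E := fun θ => b.repr.symm (WithLp.toLp 2 (nullConeCurve μ θ))
  have hv_ne : ∀ θ, v θ ≠ 0 := fun θ => by simpa [v] using nullConeCurve_ne_zero h0 θ
  have hv_null : ∀ θ, ⟪T (v θ), v θ⟫ = 0 := fun θ => by
    simpa [b.inner_apply_self_of_apply_eq_smul hb, v] using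
      sum_mul_nullConeCurve_sq h0.le h1 h2 θ
  have hcont : Continuous fun θ => ‖v θ‖⁻¹ • v θ := by
    have : Continuous v := b.repr.symm.continuous.comp
      ((PiLp.continuous_toLp 2 _).comp continuous_nullConeCurve)
    exact (this.norm.inv₀ fun θ => norm_ne_zero_iff.2 (hv_ne θ)).smul this
  have hcover : ∀ x ∈ nullSphere T, 0 ≤ b.repr x 0 → x ∈ range fun θ => ‖v θ‖⁻¹ • v θ := by
    rintro x ⟨hx1, hx0⟩ hc0
    have hc : (b.repr x).ofLp ≠ 0 := fun h => by
      simpa [h, hx1] using b.norm_sq_eq_sum_repr x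
    rw [b.inner_apply_self_of_apply_eq_smul hb] at hx0
    obtain ⟨θ, k, hk, hθ⟩ := exists_nullConeCurve_eq_smul h0 hc hx0 hc0
    have hvθ : v θ = k • x := by
      simp only [v, hθ, WithLp.toLp_smul, WithLp.toLp_ofLp, map_smul,
        LinearIsometryEquiv.symm_apply_apply]
    refine ⟨θ, show ‖v θ‖⁻¹ • v θ = x from ?_⟩
    rw [hvθ, norm_smul, hx1, Real.norm_of_nonneg hk.le, mul_one, smul_smul,
      inv_mul_cancel₀ hk.ne', one_smul]
  refine isPreconnectedUpToSign_of_subset_union_neg (isPreconnected_range hcont)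
    (range_subset_iff.2 fun θ => inv_norm_smul_mem_nullSphere (hv_ne θ) (hv_null θ))
    (fun x hx => neg_mem_nullSphere hx) fun x hx => ?_
  rcases le_total 0 (b.repr x 0) with h | h
  · exact .inl (hcover x hx h)
  · exact .inr (mem_neg.2 (hcover _ (neg_mem_nullSphere hx) (by simpa using h)))

theorem exists_sign_normal_form_fin_three (μ : Fin 3 → ℝ) :
    ∃ s : ℝ, s ≠ 0 ∧ ((∀ i, s * μ i ≤ 0) ∨ ∃ p, 0 < s * μ p ∧ ∀ q ≠ p, s * μ q ≤ 0) := by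
  by_cases hpos : ∃ p, 0 < μ p ∧ ∀ q ≠ p, μ q ≤ 0
  · exact ⟨1, one_ne_zero, .inr (by simpa using hpos)⟩
  by_cases hneg : ∃ p, μ p < 0 ∧ ∀ q ≠ p, 0 ≤ μ q
  · exact ⟨-1, by norm_num, .inr (by simpa using hneg)⟩
  by_cases hnp : ∀ i, μ i ≤ 0
  · exact ⟨1, one_ne_zero, .inl (by simpa using hnp)⟩
  by_cases hnn : ∀ i, 0 ≤ μ i
  · exact ⟨-1, by norm_num, .inl (by simpa using hnn)⟩
  push Not at hpos hneg hnp hnn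
  obtain ⟨i, hi⟩ := hnp
  obtain ⟨j, hj⟩ := hnn
  obtain ⟨i', hii', hi'⟩ := hpos i hi
  obtain ⟨j', hjj', hj'⟩ := hneg j hj
  -- two positive and two negative entries would need four distinct indices
  have : ∀ a b c d : Fin 3, a = b ∨ c = d ∨ a = c ∨ a = d ∨ b = c ∨ b = d := by decide
  obtain h | h | h | h | h | h := this i i' j j' <;> subst h <;>
    first | exact absurd rfl hii' | exact absurd rfl hjj' | linarith

theorem isPreconnectedUpToSign_nullSphere_of_finrank_eq_three {E : Type*} [NormedAddCommGroup E]
    [InnerProductSpace ℝ E] (hE : finrank ℝ E = 3) {T : E →ₗ[ℝ] E} (hT : T.IsSymmetric) :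
    IsPreconnectedUpToSign (nullSphere T) := by
  have : FiniteDimensional ℝ E := Module.finite_of_finrank_eq_succ hE
  set b := hT.eigenvectorBasis hE
  set μ := hT.eigenvalues hE
  obtain ⟨s, hs, hμ⟩ := exists_sign_normal_form_fin_three μ
  have hb : ∀ i, (s • T) (b i) = (s * μ i) • b i := fun i => by
    simp [b, μ, hT.apply_eigenvectorBasis, smul_smul]
  rw [← nullSphere_smul hs]
  rcases hμ with hμ | ⟨p, hp, hq⟩
  · rw [nullSphere_eq_sphere_inter_ker hb hμ]
    exact isPreconnectedUpToSign_sphere_inter_submodule _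
  · set σ := Equiv.swap 0 p
    refine isPreconnectedUpToSign_nullSphere_of_one_positive_eigenvalue (b := b.reindex σ)
      (μ := fun i => s * μ (σ i)) (fun i => by simp [hb, σ]) (by simpa [σ]) (hq _ ?_) (hq _ ?_) <;>
      simp [σ, Equiv.swap_apply_eq_iff]

theorem Submodule.exists_le_finrank_eq {K V : Type*} [DivisionRing K] [AddCommGroup V]
    [Module K V] [FiniteDimensional K V] (S : Submodule K V) {n : ℕ} (hSn : finrank K S ≤ n)
    (hn : n ≤ finrank K V) : ∃ W : Submodule K V, S ≤ W ∧ finrank K W = n := by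
  obtain ⟨k, rfl⟩ := Nat.exists_eq_add_of_le hSn
  clear hSn
  induction k generalizing S with
  | zero => exact ⟨S, le_rfl, rfl⟩
  | succ k ih =>
    obtain ⟨v, hv⟩ := SetLike.exists_not_mem_of_ne_top S fun h => by
      rw [h, finrank_top] at hn
      omega
    obtain ⟨W, hW, hWk⟩ := ih (S ⊔ span K {v}) (by rw [finrank_sup_span_singleton hv]; omega)
    exact ⟨W, le_sup_left.trans hW, by rw [hWk, finrank_sup_span_singleton hv]; ring⟩

theorem isPreconnectedUpToSign_nullSphere {E : Type*} [NormedAddCommGroup E]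
    [InnerProductSpace ℝ E] [FiniteDimensional ℝ E] (hE : 3 ≤ finrank ℝ E) {T : E →ₗ[ℝ] E}
    (hT : T.IsSymmetric) : IsPreconnectedUpToSign (nullSphere T) := by
  intro a ha b hb
  obtain ⟨W, hW, hW3⟩ := (Submodule.span ℝ (range ![a, b])).exists_le_finrank_eq
    ((finrank_range_le_card _).trans (by simp)) hE
  have haW : a ∈ W := hW (Submodule.subset_span ⟨0, rfl⟩)
  have hbW : b ∈ W := hW (Submodule.subset_span ⟨1, rfl⟩)
  set ι := W.subtype
  have hmem : ∀ y : W, y ∈ nullSphere (ι.adjoint ∘ₗ T ∘ₗ ι) ↔ (y : E) ∈ nullSphere T := by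
    intro y
    simp [nullSphere, LinearMap.adjoint_inner_left, ι]
  obtain ⟨K, hKZ, hK, haK, hbK⟩ := isPreconnectedUpToSign_nullSphere_of_finrank_eq_three hW3
    (hT.adjoint_conj ι) ⟨a, haW⟩ ((hmem _).2 ha) ⟨b, hbW⟩ ((hmem _).2 hb)
  refine ⟨(↑) '' K, ?_, hK.image _ continuous_subtype_val.continuousOn, ⟨_, haK, rfl⟩,
    hbK.imp (fun h => ⟨_, h, rfl⟩) (fun h => ⟨_, h, rfl⟩)⟩
  rintro _ ⟨y, hy, rfl⟩
  exact (hmem y).1 (hKZ hy)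

theorem eq_smul_of_cross_eq_zero_of_dot_eq {d w : ℝ × ℝ} {t : ℝ} (hd : d ≠ 0)
    (hcross : d.2 * w.1 - d.1 * w.2 = 0) (hdot : d.1 * w.1 + d.2 * w.2 = t * (d.1 ^ 2 + d.2 ^ 2)) :
    w = t • d := by
  have hpos : d.1 ^ 2 + d.2 ^ 2 ≠ 0 := fun h => hd <| Prod.ext
    (pow_eq_zero_iff two_ne_zero |>.1 (by nlinarith [sq_nonneg d.1, sq_nonneg d.2]))
    (pow_eq_zero_iff two_ne_zero |>.1 (by nlinarith [sq_nonneg d.1, sq_nonneg d.2]))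
  ext
  · apply mul_left_cancel₀ hpos
    simp only [Prod.smul_fst, smul_eq_mul]
    linear_combination d.1 * hdot + d.2 * hcross
  · apply mul_left_cancel₀ hpos
    simp only [Prod.smul_snd, smul_eq_mul]
    linear_combination d.2 * hdot - d.1 * hcross

section JointNumericalRange

variable {E : Type*} [NormedAddCommGroup E] [InnerProductSpace ℝ E]

def jointNumericalRange (A B : E →ₗ[ℝ] E) : Set (ℝ × ℝ) :=
  (fun x => (⟪A x, x⟫, ⟪B x, x⟫)) '' Metric.sphere 0 1

theorem convex_jointNumericalRange [FiniteDimensional ℝ E] (hE : 3 ≤ finrank ℝ E)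
    {A B : E →ₗ[ℝ] E} (hA : A.IsSymmetric) (hB : B.IsSymmetric) :
    Convex ℝ (jointNumericalRange A B) := by
  rintro _ ⟨u, hu, rfl⟩ _ ⟨v, hv, rfl⟩ s t hs ht hst
  rw [mem_sphere_zero_iff_norm] at hu hv
  set F : E → ℝ × ℝ := fun x => (⟪A x, x⟫, ⟪B x, x⟫)
  obtain rfl : s = 1 - t := by linarith
  set d := F v - F u
  by_cases hd : d = 0
  · refine ⟨u, by simpa using hu, show F u = _ from ?_⟩
    rw [sub_eq_zero.1 hd, ← add_smul, sub_add_cancel, one_smul]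
  -- on the unit sphere, `⟪R x, x⟫ = 0` says that `F x` lies on the line through `F u` and `F v`
  set R := d.2 • A - d.1 • B - (d.2 * (F u).1 - d.1 * (F u).2) • LinearMap.id
  have hR : R.IsSymmetric :=
    ((hA.smul rfl).sub (hB.smul rfl)).sub (LinearMap.IsSymmetric.id.smul rfl)
  have hRx : ∀ x, ‖x‖ = 1 → ⟪R x, x⟫ = d.2 * (F x - F u).1 - d.1 * (F x - F u).2 := by
    intro x hx
    simp only [R, F, LinearMap.sub_apply, LinearMap.smul_apply, LinearMap.id_apply, inner_sub_left,
      real_inner_smul_left, real_inner_self_eq_norm_sq, hx, Prod.mk_sub_mk]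
    ring
  set f : E → ℝ := fun x => d.1 * (F x - F u).1 + d.2 * (F x - F u).2
  have hf : Continuous f := by
    have := A.continuous_of_finiteDimensional
    have := B.continuous_of_finiteDimensional
    fun_prop
  obtain ⟨x, ⟨hx1, hx0⟩, hfx⟩ := (isPreconnectedUpToSign_nullSphere hE hR).intermediate_value
    ⟨hu, by simp [hRx u hu]⟩ ⟨hv, by rw [hRx v hv]; ring⟩ hf.continuousOn (by simp [f, F])
    (show t * (d.1 ^ 2 + d.2 ^ 2) ∈ Icc (f u) (f v) from ⟨by simp only [f, sub_self, Prod.fst_zero, Prod.snd_zero, mul_zero, add_zero]; positivity, by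
      simp only [f]; nlinarith⟩)
  refine ⟨x, by simpa using hx1, show F x = _ from ?_⟩
  rw [hRx x hx1] at hx0
  have := eq_smul_of_cross_eq_zero_of_dot_eq hd hx0 hfx
  rw [sub_eq_iff_eq_add] at this
  rw [this, smul_sub, sub_smul, one_smul]
  abel

end JointNumericalRange

namespace Matrix

theorem rank_vecMulVec_eq_one {m n K : Type*} [Fintype n] [DecidableEq n] [Field K] {w : m → K}
    {v : n → K} (hw : w ≠ 0) (hv : v ≠ 0) : (vecMulVec w v).rank = 1 := by
  refine le_antisymm (rank_vecMulVec_le w v) (Nat.one_le_iff_ne_zero.2 fun h => ?_)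
  obtain ⟨j, hj⟩ := Function.ne_iff.1 hv
  have hmem : vecMulVec w v *ᵥ Pi.single j 1 ∈ LinearMap.range (vecMulVec w v).mulVecLin :=
    ⟨_, rfl⟩
  rw [Submodule.finrank_eq_zero.1 h, Submodule.mem_bot, vecMulVec_mulVec] at hmem
  simp only [dotProduct_single, mul_one] at hmem
  exact smul_ne_zero (by simpa using hj) hw hmem

theorem PosSemidef.exists_eq_vecMulVec_self_of_rank_eq_one {n : Type*} [Fintype n]
    [DecidableEq n] {M : Matrix n n ℝ} (hM : M.PosSemidef) (hr : M.rank = 1) :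
    ∃ u, M = vecMulVec u u := by
  have hH : M.IsHermitian := hM.isHermitian
  set v := hH.eigenvectorBasis
  obtain ⟨⟨j, hj⟩, hj_unique⟩ := Fintype.card_eq_one_iff.1 (hH.rank_eq_card_non_zero_eigs ▸ hr)
  have hzero : ∀ i ≠ j, hH.eigenvalues i = 0 := fun i hi => by
    by_contra h
    exact hi (congr_arg Subtype.val (hj_unique ⟨i, h⟩))
  refine ⟨√(hH.eigenvalues j) • (v j).ofLp, toEuclideanLin.injective <| v.toBasis.ext fun i => ?_⟩
  have hdot : (v j).ofLp ⬝ᵥ (v i).ofLp = if j = i then 1 else 0 := by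
    simpa [EuclideanSpace.inner_eq_star_dotProduct, dotProduct_comm] using
      orthonormal_iff_ite.1 v.orthonormal j i
  simp only [toLpLin_apply, OrthonormalBasis.coe_toBasis, v, hH.mulVec_eigenvectorBasis,
    vecMulVec_mulVec, smul_dotProduct, hdot, op_smul_eq_smul, smul_smul]
  by_cases hij : j = i
  · subst hij
    simp [mul_self_sqrt (hM.eigenvalues_nonneg j)]
  · simp [hij, hzero i (Ne.symm hij)]

theorem inner_toEuclideanLin_toLp_self {n : Type*} [Fintype n] [DecidableEq n]
    (C : Matrix n n ℝ) (w : n → ℝ) :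
    ⟪toEuclideanLin C (WithLp.toLp 2 w), WithLp.toLp 2 w⟫ = (C * vecMulVec w w).trace := by
  rw [mul_vecMulVec, trace_vecMulVec, EuclideanSpace.inner_eq_star_dotProduct]
  simp [dotProduct_comm]

theorem norm_toLp_eq_one_iff_trace_vecMulVec {n : Type*} [Fintype n] (w : n → ℝ) :
    ‖WithLp.toLp 2 w‖ = 1 ↔ (vecMulVec w w).trace = 1 := by
  rw [← pow_eq_one_iff_of_nonneg (norm_nonneg _) two_ne_zero, EuclideanSpace.real_norm_sq_eq,
    trace_vecMulVec]
  simp [dotProduct, sq]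

end Matrix

theorem GraphLaplacian.isHermitian_L {N : ℕ} (G : GraphLaplacian N) : G.L.IsHermitian := by
  ext i j
  simp only [conjTranspose_apply, star_trivial, GraphLaplacian.L]
  by_cases h : i = j
  · subst h; rfl
  · rw [if_neg (Ne.symm h), if_neg h, G.symm]

theorem rank_one_interpolation_general {N : ℕ} (hN : 3 ≤ N) (G : GraphLaplacian N)
    (lam : Fin N → ℝ)
    (M₁ M₂ : Matrix (Fin N) (Fin N) ℝ)
    (h₁ : M₁.PosSemidef) (h₂ : M₂.PosSemidef)
    (hr₁ : M₁.rank = 1) (hr₂ : M₂.rank = 1)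
    (x₁ x₂ y₁ y₂ : ℝ)
    (ht₁ : M₁.trace = 1) (ht₂ : M₂.trace = 1)
    (hx₁ : (Matrix.diagonal lam * M₁).trace = x₁)
    (hx₂ : (Matrix.diagonal lam * M₂).trace = x₂)
    (hy₁ : (G.L * M₁).trace = y₁)
    (hy₂ : (G.L * M₂).trace = y₂)
    (β : ℝ) (hβ : β ∈ Set.Icc (0 : ℝ) 1) :
    ∃ M : Matrix (Fin N) (Fin N) ℝ, M.PosSemidef ∧ M.rank = 1 ∧ M.trace = 1 ∧
      (Matrix.diagonal lam * M).trace = β * x₁ + (1 - β) * x₂ ∧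
      (G.L * M).trace = β * y₁ + (1 - β) * y₂ := by
  obtain ⟨u, rfl⟩ := h₁.exists_eq_vecMulVec_self_of_rank_eq_one hr₁
  obtain ⟨v, rfl⟩ := h₂.exists_eq_vecMulVec_self_of_rank_eq_one hr₂
  set A := toEuclideanLin (diagonal lam)
  set B := toEuclideanLin G.L
  have hmem : ∀ w : Fin N → ℝ, (vecMulVec w w).trace = 1 →
      ((diagonal lam * vecMulVec w w).trace, (G.L * vecMulVec w w).trace) ∈
        jointNumericalRange A B := fun w hw =>
    ⟨WithLp.toLp 2 w, by simpa [norm_toLp_eq_one_iff_trace_vecMulVec] using hw,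
      by simp only [A, B, inner_toEuclideanLin_toLp_self]⟩
  obtain ⟨x, hx, hx_eq⟩ := convex_jointNumericalRange (by simpa using hN)
    (isSymmetric_toEuclideanLin_iff.2 (isHermitian_diagonal lam))
    (isSymmetric_toEuclideanLin_iff.2 G.isHermitian_L) (hmem u ht₁) (hmem v ht₂) hβ.1
    (sub_nonneg.2 hβ.2) (add_sub_cancel β 1)
  rw [mem_sphere_zero_iff_norm] at hx
  rw [hx₁, hx₂, hy₁, hy₂, Prod.ext_iff] at hx_eq
  have hx0 : x.ofLp ≠ 0 := fun h => by simp [(WithLp.ofLp_eq_zero 2).1 h] at hx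
  refine ⟨vecMulVec x.ofLp x.ofLp, by simpa using posSemidef_vecMulVec_self_star x.ofLp,
    rank_vecMulVec_eq_one hx0 hx0, (norm_toLp_eq_one_iff_trace_vecMulVec _).1 hx, ?_, ?_⟩
  · rw [← inner_toEuclideanLin_toLp_self, WithLp.toLp_ofLp]
    simpa using hx_eq.1
  · rw [← inner_toEuclideanLin_toLp_self, WithLp.toLp_ofLp]
    simpa using hx_eq.2

/-- rank-one interpolation lemma. -/
theorem rank_one_interpolation {N : ℕ} (hN : 3 ≤ N) (G : GraphLaplacian N)
    (χ : Matrix (Fin N) (Fin N) ℝ) (lam : Fin N → ℝ)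
    (hχ : χᵀ * χ = 1)
    (hdiag : χᵀ * G.L * χ = Matrix.diagonal lam)
    (M₁ M₂ : Matrix (Fin N) (Fin N) ℝ)
    (h₁ : M₁.PosSemidef) (h₂ : M₂.PosSemidef)
    (hr₁ : M₁.rank = 1) (hr₂ : M₂.rank = 1)
    (x₁ x₂ y₁ y₂ : ℝ)
    (ht₁ : M₁.trace = 1) (ht₂ : M₂.trace = 1)
    (hx₁ : (Matrix.diagonal lam * M₁).trace = x₁)
    (hx₂ : (Matrix.diagonal lam * M₂).trace = x₂)
    (hy₁ : (G.L * M₁).trace = y₁)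
    (hy₂ : (G.L * M₂).trace = y₂)
    (β : ℝ) (hβ : β ∈ Set.Icc (0 : ℝ) 1) :
    ∃ M : Matrix (Fin N) (Fin N) ℝ, M.PosSemidef ∧ M.rank = 1 ∧ M.trace = 1 ∧
      (Matrix.diagonal lam * M).trace = β * x₁ + (1 - β) * x₂ ∧
      (G.L * M).trace = β * y₁ + (1 - β) * y₂ :=
  rank_one_interpolation_general hN G lam M₁ M₂ h₁ h₂ hr₁ hr₂ x₁ x₂ y₁ y₂ ht₁ ht₂ hx₁ hx₂ hy₁ hy₂ β
    hβ
end

section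
/- Fix α ∈ ℝ and let m(α) be the smallest eigenvalue of K(α) = L - αΔ with eigenspace σ(α). Then every unit vector ν ∈ σ(α) attains the differential uncertainty curve: for every unit vector η with ⟨η, Δ η⟩ = ⟨ν, Δ ν⟩, one has ⟨η, L η⟩ ≥ ⟨ν, L ν⟩. -/
open Matrix BigOperators

section QuadraticForm

variable {n R : Type*} [Fintype n]

lemma dotProduct_sub_smul_mulVec [CommRing R] (A B : Matrix n n R) (α : R) (g : n → R) :
    g ⬝ᵥ ((A - α • B) *ᵥ g) = g ⬝ᵥ (A *ᵥ g) - α * (g ⬝ᵥ (B *ᵥ g)) := by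
  rw [sub_mulVec, dotProduct_sub, smul_mulVec, dotProduct_smul, smul_eq_mul]

lemma dotProduct_mulVec_of_mulVec_eq_smul [CommSemiring R] {A : Matrix n n R} {m : R}
    {ν : n → R} (hν : ν ⬝ᵥ ν = 1) (heig : A *ᵥ ν = m • ν) : ν ⬝ᵥ (A *ᵥ ν) = m := by
  rw [heig, dotProduct_smul, smul_eq_mul, hν, mul_one]

/-- On the level set of the form of `B` through `ν`, the forms of `A` and `A - α • B` differ by
a constant, so minimisers of the latter minimise the former there. -/
theorem dotProduct_mulVec_le_of_min_eigenvector_sub_smul [CommRing R] [LinearOrder R]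
    [IsStrictOrderedRing R] (A B : Matrix n n R) (α m : R)
    (hm : ∀ g : n → R, g ⬝ᵥ g = 1 → m ≤ g ⬝ᵥ ((A - α • B) *ᵥ g))
    {ν : n → R} (hν : ν ⬝ᵥ ν = 1) (heig : (A - α • B) *ᵥ ν = m • ν)
    {η : n → R} (hη : η ⬝ᵥ η = 1) (hB : η ⬝ᵥ (B *ᵥ η) = ν ⬝ᵥ (B *ᵥ ν)) :
    ν ⬝ᵥ (A *ᵥ ν) ≤ η ⬝ᵥ (A *ᵥ η) := by
  have hν_min := dotProduct_mulVec_of_mulVec_eq_smul hν heig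
  have hη_ge := hm η hη
  rw [dotProduct_sub_smul_mulVec] at hν_min hη_ge
  rw [hB] at hη_ge
  linarith

end QuadraticForm

theorem minimal_eigenvector_attains_DUC_general {N : ℕ} (G : GraphLaplacian N)
    (lam : Fin N → ℝ)
    (α m : ℝ)
    (hm : ∀ g : Fin N → ℝ, g ⬝ᵥ g = 1 →
      m ≤ g ⬝ᵥ ((G.L - α • Matrix.diagonal lam) *ᵥ g))
    (ν : Fin N → ℝ) (hν : ν ⬝ᵥ ν = 1)
    (heig : (G.L - α • Matrix.diagonal lam) *ᵥ ν = m • ν) :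
    ∀ η : Fin N → ℝ, η ⬝ᵥ η = 1 →
      η ⬝ᵥ (Matrix.diagonal lam *ᵥ η) = ν ⬝ᵥ (Matrix.diagonal lam *ᵥ ν) →
      ν ⬝ᵥ (G.L *ᵥ ν) ≤ η ⬝ᵥ (G.L *ᵥ η) := fun _ hη hΔ =>
  dotProduct_mulVec_le_of_min_eigenvector_sub_smul _ _ α m hm hν heig hη hΔ

/-- any unit vector in the minimal eigenspace `σ(α)` of `K(α) = L - αΔ`
attains the differential uncertainty curve. -/
theorem minimal_eigenvector_attains_DUC {N : ℕ} (G : GraphLaplacian N)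
    (χ : Matrix (Fin N) (Fin N) ℝ) (lam : Fin N → ℝ)
    (hχ : χᵀ * χ = 1)
    (hdiag : χᵀ * G.L * χ = Matrix.diagonal lam)
    (α m : ℝ)
    (hm : ∀ g : Fin N → ℝ, g ⬝ᵥ g = 1 →
      m ≤ g ⬝ᵥ ((G.L - α • Matrix.diagonal lam) *ᵥ g))
    (ν : Fin N → ℝ) (hν : ν ⬝ᵥ ν = 1)
    (heig : (G.L - α • Matrix.diagonal lam) *ᵥ ν = m • ν) :
    ∀ η : Fin N → ℝ, η ⬝ᵥ η = 1 →
      η ⬝ᵥ (Matrix.diagonal lam *ᵥ η) = ν ⬝ᵥ (Matrix.diagonal lam *ᵥ ν) →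
      ν ⬝ᵥ (G.L *ᵥ ν) ≤ η ⬝ᵥ (G.L *ᵥ η) :=
  minimal_eigenvector_attains_DUC_general G lam α m hm ν hν heig
end

section
/- For the unit-weighted complete graph on N ≥ 3 vertices with L = N·I - O (O the all-ones matrix) and Δ = diag(0, N, ..., N), the matrix K(α) = L - αΔ has, for every α ≠ 0, an eigenvalue N(1 - α) of multiplicity exactly N - 2; the remaining two eigenvalues are 1 - αN - (2 - N(α+1) ± √((N(α+1)-2)² + 4(N-1)))/2. -/
/-!
Write `S = ∑ j, v j`. Then `(K v)₀ = N v₀ - S` and `(K v)ᵢ = N(1 - α) vᵢ - S` for `i ≠ 0`,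
so for `α ≠ 0` the `N(1 - α)`-eigenspace is `{v | v₀ = 0, S = 0}`, of dimension `N - 2`.
For an eigenvector `(a, 1, …, 1)` with eigenvalue `μ`, the rows `i ≠ 0` force
`a = 1 - αN - μ`, and row `0` then becomes `μ² - N(1 - α) μ - αN(N - 1) = 0`;
the two stated values are its roots.
-/

open Matrix

section EvalProdSum

variable {K ι : Type*} [Field K] [Fintype ι]

def evalProdSum (i : ι) : (ι → K) →ₗ[K] K × K :=
  (LinearMap.proj i).prod (∑ j, LinearMap.proj j)

@[simp]
lemma evalProdSum_apply (i : ι) (v : ι → K) : evalProdSum i v = (v i, ∑ j, v j) := by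
  simp [evalProdSum]

lemma evalProdSum_surjective [DecidableEq ι] {i j : ι} (hij : i ≠ j) :
    Function.Surjective (evalProdSum (K := K) i) := by
  rintro ⟨x, y⟩
  refine ⟨Pi.single i x + Pi.single j (y - x), ?_⟩
  simp [Finset.sum_add_distrib, Pi.single_eq_of_ne hij]

lemma finrank_ker_evalProdSum {i j : ι} (hij : i ≠ j) :
    Module.finrank K (LinearMap.ker (evalProdSum (K := K) i)) = Fintype.card ι - 2 := by
  classical
  have h := LinearMap.finrank_range_add_finrank_ker (evalProdSum (K := K) i)
  rw [LinearMap.range_eq_top.mpr (evalProdSum_surjective hij), finrank_top] at h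
  simp only [Module.finrank_prod, Module.finrank_self, Module.finrank_fintype_fun_eq_card] at h
  omega

end EvalProdSum

def completeGraphK (N : ℕ) (α : ℝ) : Matrix (Fin N) (Fin N) ℝ :=
  ((N : ℝ) • (1 : Matrix (Fin N) (Fin N) ℝ) - Matrix.of fun _ _ => (1 : ℝ)) -
    α • Matrix.diagonal (fun i : Fin N => if (i : ℕ) = 0 then 0 else (N : ℝ))

lemma completeGraphK_mulVec_apply (N : ℕ) (α : ℝ) (v : Fin N → ℝ) (i : Fin N) :
    (completeGraphK N α *ᵥ v) i =
      N * v i - ∑ j, v j - α * (if (i : ℕ) = 0 then 0 else (N : ℝ)) * v i := by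
  rw [completeGraphK, sub_mulVec, sub_mulVec, smul_mulVec, smul_mulVec, one_mulVec]
  simp only [Pi.sub_apply, Pi.smul_apply, smul_eq_mul, mulVec_diagonal]
  simp [mulVec, dotProduct, mul_assoc]

lemma completeGraphK_mulVec_apply_zero (n : ℕ) (α : ℝ) (v : Fin (n + 2) → ℝ) :
    (completeGraphK (n + 2) α *ᵥ v) 0 = (n + 2 : ℕ) * v 0 - ∑ j, v j := by
  simp [completeGraphK_mulVec_apply]

lemma completeGraphK_mulVec_apply_of_ne_zero (n : ℕ) (α : ℝ) (v : Fin (n + 2) → ℝ)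
    {i : Fin (n + 2)} (hi : i ≠ 0) :
    (completeGraphK (n + 2) α *ᵥ v) i = (n + 2 : ℕ) * (1 - α) * v i - ∑ j, v j := by
  rw [completeGraphK_mulVec_apply, if_neg (Fin.val_ne_zero_iff.mpr hi)]
  ring

lemma eigenspace_completeGraphK_eq_ker (n : ℕ) {α : ℝ} (hα : α ≠ 0) :
    Module.End.eigenspace (toLin' (completeGraphK (n + 2) α)) ((n + 2 : ℕ) * (1 - α)) =
      LinearMap.ker (evalProdSum 0) := by
  ext v
  rw [Module.End.mem_eigenspace_iff, LinearMap.mem_ker, toLin'_apply, evalProdSum_apply,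
    Prod.mk_eq_zero, funext_iff]
  have hN : ((n + 2 : ℕ) : ℝ) ≠ 0 := by positivity
  constructor
  · intro h
    have h0 := h 0
    have h1 := h 1
    rw [completeGraphK_mulVec_apply_zero, Pi.smul_apply, smul_eq_mul] at h0
    rw [completeGraphK_mulVec_apply_of_ne_zero n α v one_ne_zero, Pi.smul_apply,
      smul_eq_mul] at h1
    have hsum : ∑ j, v j = 0 := by linarith
    refine ⟨?_, hsum⟩
    have : α * (n + 2 : ℕ) * v 0 = 0 := by linear_combination h0 + hsum
    exact (mul_eq_zero.mp this).resolve_left (mul_ne_zero hα hN)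
  · rintro ⟨h0, hsum⟩ i
    rw [Pi.smul_apply, smul_eq_mul]
    rcases eq_or_ne i 0 with rfl | hi
    · rw [completeGraphK_mulVec_apply_zero, h0, hsum]; ring
    · rw [completeGraphK_mulVec_apply_of_ne_zero n α v hi, hsum]; ring

lemma hasEigenvalue_completeGraphK_of_quadratic (n : ℕ) (α : ℝ) {μ : ℝ}
    (hμ : μ ^ 2 - ((n + 2 : ℕ) - α * (n + 2 : ℕ)) * μ
      - α * (n + 2 : ℕ) * ((n + 2 : ℕ) - 1) = 0) :
    Module.End.HasEigenvalue (toLin' (completeGraphK (n + 2) α)) μ := by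
  set v : Fin (n + 2) → ℝ := fun j => if j = 0 then 1 - α * (n + 2 : ℕ) - μ else 1 with hv
  have hsum : ∑ j, v j = 1 - α * (n + 2 : ℕ) - μ + (n + 1 : ℕ) := by
    rw [Fin.sum_univ_succ]
    simp [hv, Fin.succ_ne_zero]
  refine Module.End.hasEigenvalue_of_hasEigenvector (x := v) ⟨?_, ?_⟩
  · rw [Module.End.mem_eigenspace_iff, toLin'_apply]
    funext i
    rw [Pi.smul_apply, smul_eq_mul]
    rcases eq_or_ne i 0 with rfl | hi
    · rw [completeGraphK_mulVec_apply_zero, hsum]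
      simp only [hv, if_pos]
      push_cast at hμ ⊢
      linear_combination hμ
    · rw [completeGraphK_mulVec_apply_of_ne_zero n α v hi, hsum]
      simp only [hv, if_neg hi]
      push_cast
      ring
  · intro h
    simpa [hv] using congrFun h 1

/-- for the unit-weighted complete graph on `N ≥ 3` vertices,
`K(α) = L - αΔ` (with `L = N·I - O`, `Δ = diag(0, N, …, N)`) has, for every `α ≠ 0`,
eigenvalue `N(1-α)` with multiplicity exactly `N - 2`; the remaining two eigenvalues are
`1 - αN - (2 - N(α+1) ± √((N(α+1)-2)² + 4(N-1)))/2`. -/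
theorem complete_graph_K_spectrum (N : ℕ) (hN : 3 ≤ N) (α : ℝ) (hα : α ≠ 0) :
    Module.finrank ℝ
      ↥(Module.End.eigenspace
          (Matrix.toLin'
            (((N : ℝ) • (1 : Matrix (Fin N) (Fin N) ℝ) - Matrix.of fun _ _ => (1 : ℝ)) -
              α • Matrix.diagonal (fun i : Fin N => if (i : ℕ) = 0 then 0 else (N : ℝ))))
          ((N : ℝ) * (1 - α))) = N - 2 ∧
    Module.End.HasEigenvalue
      (Matrix.toLin'
        (((N : ℝ) • (1 : Matrix (Fin N) (Fin N) ℝ) - Matrix.of fun _ _ => (1 : ℝ)) -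
          α • Matrix.diagonal (fun i : Fin N => if (i : ℕ) = 0 then 0 else (N : ℝ))))
      (1 - α * N -
        (2 - N * (α + 1) + Real.sqrt ((N * (α + 1) - 2) ^ 2 + 4 * (N - 1))) / 2) ∧
    Module.End.HasEigenvalue
      (Matrix.toLin'
        (((N : ℝ) • (1 : Matrix (Fin N) (Fin N) ℝ) - Matrix.of fun _ _ => (1 : ℝ)) -
          α • Matrix.diagonal (fun i : Fin N => if (i : ℕ) = 0 then 0 else (N : ℝ))))
      (1 - α * N -
        (2 - N * (α + 1) - Real.sqrt ((N * (α + 1) - 2) ^ 2 + 4 * (N - 1))) / 2) := by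
  obtain ⟨n, rfl⟩ : ∃ n, N = n + 2 := ⟨N - 2, by omega⟩
  have hdisc : (0 : ℝ) ≤ ((n + 2 : ℕ) * (α + 1) - 2) ^ 2 + 4 * ((n + 2 : ℕ) - 1) := by
    push_cast
    nlinarith [sq_nonneg ((n + 2 : ℝ) * (α + 1) - 2), (n.cast_nonneg : (0 : ℝ) ≤ n)]
  have hsqrt := Real.sq_sqrt hdisc
  refine ⟨?_,
    hasEigenvalue_completeGraphK_of_quadratic n α (by linear_combination (1 / 4) * hsqrt),
    hasEigenvalue_completeGraphK_of_quadratic n α (by linear_combination (1 / 4) * hsqrt)⟩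
  change Module.finrank ℝ (Module.End.eigenspace (toLin' (completeGraphK (n + 2) α)) _) = _
  rw [eigenspace_completeGraphK_eq_ker n hα, finrank_ker_evalProdSum zero_ne_one, Fintype.card_fin]
end

section
/- For the unit-weighted complete graph on N ≥ 3 vertices, the vector χ₁ = (1/√2)(1, -1, 0, ..., 0) is an eigenvector of L for eigenvalue N, its graph Fourier transform can be taken to be e₁, and |supp(χ₁)|·|supp(χ̂₁)| = 2 < N; hence the Donoho–Stark-type support inequality |supp(f)|·|supp(f̂)| ≥ N fails for the graph Fourier transform. -/
open Matrix BigOperators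

/-!
On the complete graph `L x = N • x - (∑ k, x k) • 1`, so every zero-sum vector is an eigenvector
for the eigenvalue `N` and the constant vectors lie in the kernel. Extending the orthonormal pair
(constant unit vector, `χ₁`) to an orthonormal basis therefore gives an orthogonal matrix `χ`
diagonalizing `L` with `χ₁` as a column, whence `χᵀ χ₁ = e₁`.
-/

namespace Matrix

variable {n R : Type*} [Fintype n] [DecidableEq n] [CommRing R]

theorem transpose_mulVec_col_of_transpose_mul_self {χ : Matrix n n R} (hχ : χᵀ * χ = 1)
    (k : n) : χᵀ *ᵥ χ.col k = Pi.single k 1 := by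
  rw [← mulVec_single_one, mulVec_mulVec, hχ, one_mulVec]

theorem transpose_mul_mul_eq_diagonal {χ A : Matrix n n R} {lam : n → R}
    (hχ : χᵀ * χ = 1) (hA : ∀ k, A *ᵥ χ.col k = lam k • χ.col k) :
    χᵀ * A * χ = diagonal lam := by
  have hAχ : A * χ = χ * diagonal lam := by
    ext i k
    rw [mul_diagonal]
    simpa [mulVec, dotProduct, mul_apply, mul_comm] using congrFun (hA k) i
  rw [Matrix.mul_assoc, hAχ, ← Matrix.mul_assoc, hχ, Matrix.one_mul]

theorem smul_one_sub_ones_mulVec (c : R) (x : n → R) :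
    (c • (1 : Matrix n n R) - of fun _ _ => 1) *ᵥ x = c • x - (∑ j, x j) • 1 := by
  rw [sub_mulVec, smul_mulVec, one_mulVec]
  ext i
  simp [mulVec, dotProduct]

theorem smul_one_sub_ones_mulVec_of_sum_eq_zero (c : R) {x : n → R} (hx : ∑ j, x j = 0) :
    (c • (1 : Matrix n n R) - of fun _ _ => 1) *ᵥ x = c • x := by
  rw [smul_one_sub_ones_mulVec, hx, zero_smul, sub_zero]

theorem card_smul_one_sub_ones_mulVec_smul_one (a : R) :
    ((Fintype.card n : R) • (1 : Matrix n n R) - of fun _ _ => 1) *ᵥ (a • 1) = 0 := by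
  simp [smul_one_sub_ones_mulVec, smul_smul, mul_comm]

theorem single_sub_single_dotProduct_self {i j : n} (hij : i ≠ j) :
    (Pi.single i 1 - Pi.single j 1 : n → R) ⬝ᵥ (Pi.single i 1 - Pi.single j 1) = 2 := by
  simp [dotProduct_sub, hij, hij.symm, one_add_one_eq_two]

theorem exists_transpose_mul_self_eq_one_col_eq {u v : n → ℝ} (hu : u ⬝ᵥ u = 1)
    (hv : v ⬝ᵥ v = 1) (huv : u ⬝ᵥ v = 0) {i j : n} (hij : i ≠ j) :
    ∃ χ : Matrix n n ℝ, χᵀ * χ = 1 ∧ χ.col i = u ∧ χ.col j = v := by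
  let w : n → EuclideanSpace ℝ n := fun k => WithLp.toLp 2 (if k = i then u else v)
  have hw : Orthonormal ℝ (({i, j} : Set n).domRestrict w) := by
    rw [orthonormal_iff_ite]
    rintro ⟨k, hk⟩ ⟨l, hl⟩
    simp only [Set.mem_insert_iff, Set.mem_singleton_iff] at hk hl
    rcases hk with rfl | rfl <;> rcases hl with rfl | rfl <;>
      simp only [Set.domRestrict, w, EuclideanSpace.inner_toLp_toLp, star_trivial] <;>
      simp [hij, hij.symm, hu, hv, huv, dotProduct_comm]
  obtain ⟨b, hb⟩ := hw.exists_orthonormalBasis_extension_of_card_eq (by simp)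
  refine ⟨(EuclideanSpace.basisFun n ℝ).toBasis.toMatrix b, ?_, ?_, ?_⟩
  · simpa [conjTranspose_eq_transpose_of_trivial] using
      (EuclideanSpace.basisFun n ℝ).toMatrix_orthonormalBasis_conjTranspose_mul_self b
  · ext k; simp [Module.Basis.toMatrix_apply, hb i (by simp), w]
  · ext k; simp [Module.Basis.toMatrix_apply, hb j (by simp), w, hij.symm]

theorem exists_orthogonal_diagonalization_col_eq_of_sum_eq_zero {v : n → ℝ} (hv : v ⬝ᵥ v = 1)
    (hsum : ∑ k, v k = 0) {i j : n} (hij : i ≠ j) :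
    ∃ (χ : Matrix n n ℝ) (lam : n → ℝ), χᵀ * χ = 1 ∧
      χᵀ * ((Fintype.card n : ℝ) • (1 : Matrix n n ℝ) - of fun _ _ => 1) * χ = diagonal lam ∧
      χ.col j = v := by
  have : Nonempty n := ⟨i⟩
  set a : ℝ := (√(Fintype.card n))⁻¹
  have hcard : (0 : ℝ) < Fintype.card n := by exact_mod_cast Fintype.card_pos
  have ha : a ≠ 0 := by positivity
  have hdot (x : n → ℝ) : (a • 1 : n → ℝ) ⬝ᵥ x = a * ∑ k, x k := by
    rw [smul_dotProduct, one_dotProduct, smul_eq_mul]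
  have hu : (a • 1 : n → ℝ) ⬝ᵥ (a • 1) = 1 := by
    rw [hdot]
    simp only [Pi.smul_apply, Pi.one_apply, smul_eq_mul, mul_one, Finset.sum_const,
      Finset.card_univ, nsmul_eq_mul]
    rw [mul_left_comm, ← sq, inv_pow, Real.sq_sqrt hcard.le, mul_inv_cancel₀ hcard.ne']
  obtain ⟨χ, hχ, hχi, hχj⟩ :=
    exists_transpose_mul_self_eq_one_col_eq hu hv (by rw [hdot, hsum, mul_zero]) hij
  refine ⟨χ, fun k => if k = i then 0 else (Fintype.card n : ℝ), hχ,
    transpose_mul_mul_eq_diagonal hχ fun k => ?_, hχj⟩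
  by_cases hk : k = i
  · subst hk
    rw [hχi, card_smul_one_sub_ones_mulVec_smul_one, if_pos rfl, zero_smul]
  · have horth : (a • 1 : n → ℝ) ⬝ᵥ χ.col k = 0 := by
      have h := congrFun (congrFun hχ i) k
      rw [one_apply_ne (Ne.symm hk)] at h
      rw [← hχi]
      exact h
    rw [hdot, mul_eq_zero] at horth
    rw [smul_one_sub_ones_mulVec_of_sum_eq_zero _ (horth.resolve_left ha), if_neg hk]

end Matrix

theorem support_smul_single_sub_single {n R : Type*} [DecidableEq n] [Ring R] [IsDomain R]
    {c : R} (hc : c ≠ 0) {i j : n} (hij : i ≠ j) :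
    Function.support (c • (Pi.single i 1 - Pi.single j 1) : n → R) = {i, j} := by
  rw [Function.support_const_smul_of_ne_zero _ _ hc]
  ext k
  by_cases hki : k = i <;> by_cases hkj : k = j <;> simp_all

/-- for the unit-weighted complete graph on `N ≥ 3` vertices,
`χ₁ = (1/√2)(1, -1, 0, …, 0)` is an eigenvector of `L = N·I - O` for the eigenvalue `N`,
its graph Fourier transform can be taken to be `e₁`, and
`|supp χ₁| · |supp χ̂₁| = 2 < N`: the Donoho–Stark-type support inequality fails. -/
theorem complete_graph_support_failure (N : ℕ) (hN : 3 ≤ N) :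
    (((N : ℝ) • (1 : Matrix (Fin N) (Fin N) ℝ) - Matrix.of fun _ _ => (1 : ℝ)) *ᵥ
        (fun i : Fin N => if (i : ℕ) = 0 then 1 / Real.sqrt 2
          else if (i : ℕ) = 1 then -(1 / Real.sqrt 2) else 0)) =
      (N : ℝ) • (fun i : Fin N => if (i : ℕ) = 0 then 1 / Real.sqrt 2
          else if (i : ℕ) = 1 then -(1 / Real.sqrt 2) else 0) ∧
    (∃ (χ : Matrix (Fin N) (Fin N) ℝ) (lam : Fin N → ℝ),
      χᵀ * χ = 1 ∧
      χᵀ * ((N : ℝ) • (1 : Matrix (Fin N) (Fin N) ℝ) - Matrix.of fun _ _ => (1 : ℝ)) * χ =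
        Matrix.diagonal lam ∧
      χᵀ *ᵥ (fun i : Fin N => if (i : ℕ) = 0 then 1 / Real.sqrt 2
          else if (i : ℕ) = 1 then -(1 / Real.sqrt 2) else 0) =
        (fun i : Fin N => if (i : ℕ) = 1 then 1 else 0)) ∧
    (Function.support (fun i : Fin N => if (i : ℕ) = 0 then 1 / Real.sqrt 2
        else if (i : ℕ) = 1 then -(1 / Real.sqrt 2) else 0)).ncard *
      (Function.support (fun i : Fin N => if (i : ℕ) = 1 then (1 : ℝ) else 0)).ncard = 2 ∧
    2 < N := by
  set i₀ : Fin N := ⟨0, by omega⟩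
  set i₁ : Fin N := ⟨1, by omega⟩
  have hne : i₀ ≠ i₁ := by simp [i₀, i₁, Fin.ext_iff]
  have hχ₁ : (fun i : Fin N => if (i : ℕ) = 0 then 1 / Real.sqrt 2
      else if (i : ℕ) = 1 then -(1 / Real.sqrt 2) else 0) =
      (√2)⁻¹ • (Pi.single i₀ 1 - Pi.single i₁ 1) := by
    ext k
    by_cases h0 : (k : ℕ) = 0 <;> by_cases h1 : (k : ℕ) = 1 <;>
      simp [Pi.single_apply, Fin.ext_iff, i₀, i₁, h0, h1]
  have he₁ : (fun i : Fin N => if (i : ℕ) = 1 then (1 : ℝ) else 0) = Pi.single i₁ 1 := by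
    ext k
    simp [Pi.single_apply, Fin.ext_iff, i₁]
  have hsum : ∑ k, ((√2)⁻¹ • (Pi.single i₀ 1 - Pi.single i₁ 1) : Fin N → ℝ) k = 0 := by
    simp [← Finset.mul_sum]
  have hnorm : ((√2)⁻¹ • (Pi.single i₀ 1 - Pi.single i₁ 1) : Fin N → ℝ) ⬝ᵥ
      ((√2)⁻¹ • (Pi.single i₀ 1 - Pi.single i₁ 1)) = 1 := by
    rw [smul_dotProduct, dotProduct_smul, single_sub_single_dotProduct_self hne, smul_eq_mul,
      smul_eq_mul, ← mul_assoc, ← mul_inv, Real.mul_self_sqrt zero_le_two,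
      inv_mul_cancel₀ two_ne_zero]
  obtain ⟨χ, lam, hχ, hdiag, hcol⟩ :=
    exists_orthogonal_diagonalization_col_eq_of_sum_eq_zero hnorm hsum hne
  rw [Fintype.card_fin] at hdiag
  rw [hχ₁, he₁]
  refine ⟨smul_one_sub_ones_mulVec_of_sum_eq_zero _ hsum,
    ⟨χ, lam, hχ, hdiag, hcol ▸ transpose_mulVec_col_of_transpose_mul_self hχ i₁⟩, ?_, by omega⟩
  rw [support_smul_single_sub_single (by positivity) hne, Pi.support_single_of_ne one_ne_zero,
    Set.ncard_pair hne, Set.ncard_singleton]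
end

section
/- For the unit-weighted complete graph on N > 2 vertices and every f ∈ ℝ^N, (N - √N)‖f‖² ≤ ‖D_r f‖² + ‖D_r f̂‖² ≤ 2N ‖f‖²; equivalently, the smallest eigenvalue of L + Δ is at least N - √N and the largest is at most 2N. -/
open Matrix Finset

/-! With `g = χᵀ f`, orthogonality of `χ` gives `⟨f, L f⟩ = ⟨g, Δ g⟩ = N (‖g‖² - g₀²)` and
`‖g‖ = ‖f‖`, while `⟨g, L g⟩ = N ‖g‖² - (∑ gᵢ)²`. Hence the quantity to bound is
`2N ‖g‖² - (N g₀² + (∑ gᵢ)²)`, and the upper bound is immediate. For the lower bound, Sedrakyan's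
inequality with weights `√N` at `0` and `N + √N` elsewhere, whose reciprocals sum to `1` because
`1/√N + (N - 1)/(N + √N) = 1`, gives `(∑ gᵢ)² ≤ (N + √N) ‖g‖² - N g₀²`. -/

section
variable {ι R : Type*} [Fintype ι] [DecidableEq ι] [CommRing R]

theorem dotProduct_smul_one_sub_allOnes_mulVec (c : R) (v : ι → R) :
    v ⬝ᵥ ((c • (1 : Matrix ι ι R) - of fun _ _ => (1 : R)) *ᵥ v) = c * (v ⬝ᵥ v) - (∑ i, v i) ^ 2 := by
  rw [sub_mulVec, dotProduct_sub, smul_mulVec, one_mulVec, dotProduct_smul, smul_eq_mul]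
  simp only [dotProduct, mulVec, of_apply, one_mul, sq, sum_mul, mul_sum]
  rw [sum_comm]

theorem dotProduct_mulVec_eq_of_mul_transpose_eq_one {χ : Matrix ι ι R} (hχ : χ * χᵀ = 1)
    (A : Matrix ι ι R) (v : ι → R) :
    v ⬝ᵥ (A *ᵥ v) = (χᵀ *ᵥ v) ⬝ᵥ ((χᵀ * A * χ) *ᵥ (χᵀ *ᵥ v)) := by
  have hA : χ * (χᵀ * A * χ) * χᵀ = A := by
    simp only [← Matrix.mul_assoc, hχ, Matrix.one_mul]
    rw [Matrix.mul_assoc, hχ, Matrix.mul_one]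
  conv_lhs => rw [← hA, ← mulVec_mulVec, ← mulVec_mulVec, dotProduct_mulVec, ← mulVec_transpose]

theorem dotProduct_diagonal_ite_mulVec (i₀ : ι) (c : R) (v : ι → R) :
    v ⬝ᵥ (diagonal (fun i => if i = i₀ then 0 else c) *ᵥ v) = c * (v ⬝ᵥ v - v i₀ ^ 2) := by
  simp only [mulVec_diagonal, dotProduct]
  rw [← sum_erase_add _ _ (mem_univ i₀), ← sum_erase_add _ _ (mem_univ i₀),
    sum_congr rfl fun i hi => show v i * ((if i = i₀ then 0 else c) * v i) = c * (v i * v i) by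
      rw [if_neg (ne_of_mem_erase hi)]; ring, ← mul_sum, if_pos rfl]
  ring

theorem card_mul_sq_add_sq_sum_le (i₀ : ι) (g : ι → ℝ) :
    (Fintype.card ι : ℝ) * g i₀ ^ 2 + (∑ i, g i) ^ 2 ≤
      (Fintype.card ι + √(Fintype.card ι : ℝ)) * ∑ i, g i ^ 2 := by
  set n : ℝ := (Fintype.card ι : ℝ)
  set r := √n
  have hcard_pos : 0 < Fintype.card ι := Fintype.card_pos_iff.mpr ⟨i₀⟩
  have hn : 1 ≤ n := Nat.one_le_cast.mpr hcard_pos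
  have hr : 1 ≤ r := Real.one_le_sqrt.mpr hn
  have hrr : r ^ 2 = n := Real.sq_sqrt (by linarith)
  set w : ι → ℝ := fun i => if i = i₀ then r else n + r
  have hw_erase : ∀ i ∈ univ.erase i₀, w i = n + r := fun i hi => if_neg (ne_of_mem_erase hi)
  have hw_pos : ∀ i ∈ univ, 0 < (w i)⁻¹ := fun i _ => by
    simp only [w]; split_ifs <;> positivity
  have hw_sum : ∑ i, (w i)⁻¹ = 1 := by
    have hcard : ((univ.erase i₀).card : ℝ) = n - 1 := by
      rw [card_erase_of_mem (mem_univ i₀), card_univ, Nat.cast_pred hcard_pos]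
    rw [← sum_erase_add _ _ (mem_univ i₀), sum_congr rfl fun i hi => by rw [hw_erase i hi],
      sum_const, nsmul_eq_mul, hcard, show w i₀ = r from if_pos rfl]
    field_simp
    nlinarith
  have hsq_sum : ∑ i, g i ^ 2 / (w i)⁻¹ = (n + r) * ∑ i, g i ^ 2 - n * g i₀ ^ 2 := by
    simp only [div_inv_eq_mul]
    rw [← sum_erase_add _ _ (mem_univ i₀), ← sum_erase_add _ _ (mem_univ i₀),
      sum_congr rfl fun i hi => by rw [hw_erase i hi], ← sum_mul, show w i₀ = r from if_pos rfl]
    ring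
  have := sq_sum_div_le_sum_sq_div univ g hw_pos
  rw [hw_sum, div_one, hsq_sum] at this
  linarith

end

theorem complete_graph_uncertainty_general (N : ℕ)
    (χ : Matrix (Fin N) (Fin N) ℝ)
    (hχ : χᵀ * χ = 1)
    (hdiag : χᵀ * ((N : ℝ) • (1 : Matrix (Fin N) (Fin N) ℝ) - Matrix.of fun _ _ => (1 : ℝ)) * χ =
      Matrix.diagonal (fun i : Fin N => if (i : ℕ) = 0 then 0 else (N : ℝ))) :
    ∀ f : Fin N → ℝ,
      ((N : ℝ) - Real.sqrt N) * (f ⬝ᵥ f) ≤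
        f ⬝ᵥ (((N : ℝ) • (1 : Matrix (Fin N) (Fin N) ℝ) - Matrix.of fun _ _ => (1 : ℝ)) *ᵥ f) +
          (χᵀ *ᵥ f) ⬝ᵥ (((N : ℝ) • (1 : Matrix (Fin N) (Fin N) ℝ) - Matrix.of fun _ _ => (1 : ℝ))
            *ᵥ (χᵀ *ᵥ f)) ∧
      f ⬝ᵥ (((N : ℝ) • (1 : Matrix (Fin N) (Fin N) ℝ) - Matrix.of fun _ _ => (1 : ℝ)) *ᵥ f) +
          (χᵀ *ᵥ f) ⬝ᵥ (((N : ℝ) • (1 : Matrix (Fin N) (Fin N) ℝ) - Matrix.of fun _ _ => (1 : ℝ))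
            *ᵥ (χᵀ *ᵥ f)) ≤
        2 * (N : ℝ) * (f ⬝ᵥ f) := by
  intro f
  obtain rfl | hN := N.eq_zero_or_pos
  · simp
  have : NeZero N := ⟨hN.ne'⟩
  set g := χᵀ *ᵥ f
  have hχ' : χ * χᵀ = 1 := mul_eq_one_comm.mp hχ
  have hnorm : g ⬝ᵥ g = f ⬝ᵥ f := by
    simpa [hχ] using (dotProduct_mulVec_eq_of_mul_transpose_eq_one hχ' 1 f).symm
  have hf : f ⬝ᵥ (((N : ℝ) • (1 : Matrix (Fin N) (Fin N) ℝ) - of fun _ _ => (1 : ℝ)) *ᵥ f) =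
      N * (g ⬝ᵥ g - g 0 ^ 2) := by
    rw [dotProduct_mulVec_eq_of_mul_transpose_eq_one hχ', hdiag]
    simp only [Fin.val_eq_zero_iff]
    exact dotProduct_diagonal_ite_mulVec 0 _ g
  have hsq : ∑ i, g i ^ 2 = g ⬝ᵥ g := by simp [dotProduct, sq]
  have hkey := card_mul_sq_add_sq_sum_le 0 g
  rw [Fintype.card_fin, hsq] at hkey
  rw [hf, dotProduct_smul_one_sub_allOnes_mulVec, ← hnorm]
  constructor
  · linarith
  · linarith [sq_nonneg (∑ i, g i), mul_nonneg (Nat.cast_nonneg (α := ℝ) N) (sq_nonneg (g 0))]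

/-- for the unit-weighted complete graph on `N > 2` vertices, with
`L = N·I - O`, `Δ = diag(0, N, …, N) = χᵀ L χ`, and `f̂ = χᵀ f`, every `f : Fin N → ℝ`
satisfies `(N - √N)‖f‖² ≤ ‖D_r f‖² + ‖D_r f̂‖² ≤ 2N‖f‖²`
(where `‖D_r g‖² = ⟨g, L g⟩`). -/
theorem complete_graph_uncertainty (N : ℕ) (hN : 2 < N)
    (χ : Matrix (Fin N) (Fin N) ℝ)
    (hχ : χᵀ * χ = 1)
    (hdiag : χᵀ * ((N : ℝ) • (1 : Matrix (Fin N) (Fin N) ℝ) - Matrix.of fun _ _ => (1 : ℝ)) * χ =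
      Matrix.diagonal (fun i : Fin N => if (i : ℕ) = 0 then 0 else (N : ℝ))) :
    ∀ f : Fin N → ℝ,
      ((N : ℝ) - Real.sqrt N) * (f ⬝ᵥ f) ≤
        f ⬝ᵥ (((N : ℝ) • (1 : Matrix (Fin N) (Fin N) ℝ) - Matrix.of fun _ _ => (1 : ℝ)) *ᵥ f) +
          (χᵀ *ᵥ f) ⬝ᵥ (((N : ℝ) • (1 : Matrix (Fin N) (Fin N) ℝ) - Matrix.of fun _ _ => (1 : ℝ))
            *ᵥ (χᵀ *ᵥ f)) ∧
      f ⬝ᵥ (((N : ℝ) • (1 : Matrix (Fin N) (Fin N) ℝ) - Matrix.of fun _ _ => (1 : ℝ)) *ᵥ f) +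
          (χᵀ *ᵥ f) ⬝ᵥ (((N : ℝ) • (1 : Matrix (Fin N) (Fin N) ℝ) - Matrix.of fun _ _ => (1 : ℝ))
            *ᵥ (χᵀ *ᵥ f)) ≤
        2 * (N : ℝ) * (f ⬝ᵥ f) :=
  complete_graph_uncertainty_general N χ hχ hdiag
end
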